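/- arXiv:1801.02741 — 2 statements merged into one kernel-verified Lean document; each statement's English description precedes it below -/
import Mathlib

section
/- Let g(x₁, x₂, x_{1τ}, x_{2τ}) = 1 - ((x₂ + ŝ)/τ)·(c·(x_{2τ} + ŝ - (b(x_{1τ}+Ŵ)/c)^{1/3})³ + x_{1τ} + Ŵ - Cτ), where ŝ = (bŴ/c)^{1/3}, b, c, τ, Ŵ > 0. Then all second-order partial derivatives of g involving x_{2τ} (namely ∂²g/∂x_{2τ}², ∂²g/∂x₂∂x_{2τ}, ∂²g/∂x_{1τ}∂x_{2τ}, ∂²g/∂x₁∂x_{2τ}) evaluate to zero at the origin. -/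
/-- Derivative of the inner (in `x₂τ`) function. -/
lemma cubic_inner_deriv (K c s a p q r v : ℝ) :
    deriv (fun w : ℝ => 1 - K * (c * (w + s - a) ^ 3 + p + q - r)) v
      = -(K * (c * (3 * (v + s - a) ^ 2))) := by
  have h1 : HasDerivAt (fun w : ℝ => w + s - a) 1 v :=
    ((hasDerivAt_id v).add_const s).sub_const a
  have h2 : HasDerivAt (fun w : ℝ => (w + s - a) ^ 3)
      (3 * (v + s - a) ^ 2 * 1) v := h1.pow 3
  have h3 := (((h2.const_mul c).add_const p).add_const q).sub_const r
  have h4 := (hasDerivAt_const v (1 : ℝ)).fun_sub (h3.const_mul K)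
  have h5 : HasDerivAt (fun w : ℝ => 1 - K * (c * (w + s - a) ^ 3 + p + q - r))
      (-(K * (c * (3 * (v + s - a) ^ 2)))) v := by
    exact h4.congr_deriv (by ring)
  exact h5.deriv

/-- All second-order partial derivatives of `g = ẋ₂` involving the delayed
variable `x₂τ` vanish at the origin. -/
theorem cubic_x2dot_mixed_partials_vanish
    (b c τ C W_hat s_hat : ℝ)
    (hb : 0 < b) (hc : 0 < c) (hτ : 0 < τ) (hW : 0 < W_hat)
    (hs : s_hat = (b * W_hat / c) ^ ((1 : ℝ) / 3))
    (g : ℝ → ℝ → ℝ → ℝ → ℝ)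
    (hg : ∀ x₁ x₂ x₁τ x₂τ : ℝ,
      g x₁ x₂ x₁τ x₂τ = 1 - (x₂ + s_hat) / τ *
        (c * (x₂τ + s_hat - (b * (x₁τ + W_hat) / c) ^ ((1 : ℝ) / 3)) ^ 3
          + x₁τ + W_hat - C * τ)) :
    -- ∂²g/∂x₂τ² (0) = 0
    deriv (fun v => deriv (fun w => g 0 0 0 w) v) 0 = 0 ∧
    -- ∂²g/∂x₂∂x₂τ (0) = 0
    deriv (fun y => deriv (fun w => g 0 y 0 w) 0) 0 = 0 ∧
    -- ∂²g/∂x₁τ∂x₂τ (0) = 0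
    deriv (fun z => deriv (fun w => g 0 0 z w) 0) 0 = 0 ∧
    -- ∂²g/∂x₁∂x₂τ (0) = 0
    deriv (fun x => deriv (fun w => g x 0 0 w) 0) 0 = 0 := by
  have ha0 : (b * ((0:ℝ) + W_hat) / c) ^ ((1 : ℝ) / 3) = s_hat := by
    rw [zero_add, ← hs]
  refine ⟨?_, ?_, ?_, ?_⟩
  · -- ∂²/∂x₂τ²
    have h1 : (fun v => deriv (fun w => g 0 0 0 w) v)
        = fun v : ℝ => (-(3 * ((0 + s_hat) / τ) * c)) * v ^ 2 := by
      funext v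
      simp only [hg]
      rw [cubic_inner_deriv]
      rw [ha0]; ring
    rw [h1]
    have := ((hasDerivAt_pow 2 (0:ℝ)).const_mul (-(3 * ((0 + s_hat) / τ) * c))).deriv
    rw [this]; norm_num
  · -- ∂²/∂x₂∂x₂τ
    have h1 : (fun y => deriv (fun w => g 0 y 0 w) 0) = fun _ : ℝ => (0:ℝ) := by
      funext y
      simp only [hg]
      rw [cubic_inner_deriv, ha0]; ring
    rw [h1, deriv_const]
  · -- ∂²/∂x₁τ∂x₂τ
    have h1 : (fun z => deriv (fun w => g 0 0 z w) 0)
        = fun z : ℝ => (-(3 * ((0 + s_hat) / τ) * c)) *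
            (s_hat - (b * (z + W_hat) / c) ^ ((1 : ℝ) / 3)) ^ 2 := by
      funext z
      simp only [hg]
      rw [cubic_inner_deriv]; ring
    rw [h1]
    -- derivative of the rpow composition
    have hpos : (0:ℝ) < b * ((0:ℝ) + W_hat) / c := by
      rw [zero_add]; positivity
    have hinner : HasDerivAt (fun z : ℝ => b * (z + W_hat) / c) (b / c) 0 := by
      have : HasDerivAt (fun z : ℝ => b * (z + W_hat)) b 0 := by
        simpa using (((hasDerivAt_id (0:ℝ)).add_const W_hat).const_mul b)
      simpa using this.div_const c
    have hrpow : HasDerivAt (fun x : ℝ => x ^ ((1:ℝ)/3))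
        (((1:ℝ)/3) * (b * ((0:ℝ) + W_hat) / c) ^ ((1:ℝ)/3 - 1))
        (b * ((0:ℝ) + W_hat) / c) :=
      Real.hasDerivAt_rpow_const (Or.inl (ne_of_gt hpos))
    have ha : HasDerivAt (fun z : ℝ => (b * (z + W_hat) / c) ^ ((1:ℝ)/3))
        (((1:ℝ)/3) * (b * ((0:ℝ) + W_hat) / c) ^ ((1:ℝ)/3 - 1) * (b / c)) 0 :=
      by exact hrpow.comp 0 hinner
    set D := ((1:ℝ)/3) * (b * ((0:ℝ) + W_hat) / c) ^ ((1:ℝ)/3 - 1) * (b / c)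
    have hsub : HasDerivAt
        (fun z : ℝ => s_hat - (b * (z + W_hat) / c) ^ ((1:ℝ)/3)) (-D) 0 := by
      simpa using (hasDerivAt_const (0:ℝ) s_hat).fun_sub ha
    have hsq := hsub.fun_pow 2
    have hfin := hsq.const_mul (-(3 * ((0 + s_hat) / τ) * c))
    rw [hfin.deriv]
    rw [ha0]
    ring
  · -- ∂²/∂x₁∂x₂τ
    have h1 : (fun x => deriv (fun w => g x 0 0 w) 0) = fun _ : ℝ => (0:ℝ) := by
      funext x
      simp only [hg]
      rw [cubic_inner_deriv, ha0]; ring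
    rw [h1, deriv_const]
end

section
/- For any p > 0 consider Ŵ_Reno = √(2/p) and Ŵ_CUBIC = (τ³c/(p³b))^{1/4} with τ, c, b > 0. Then there exists p* > 0 such that for all 0 < p < p*, Ŵ_CUBIC > Ŵ_Reno; moreover Ŵ_CUBIC/Ŵ_Reno = (τ³c/(4b))^{1/4}·p^{-1/4} → ∞ as p → 0⁺. -/
open Filter Topology

lemma sqrt_eq_sq_rpow_quarter {x : ℝ} (hx : 0 ≤ x) : √x = (x ^ 2) ^ ((1 : ℝ) / 4) := by
  rw [Real.sqrt_eq_rpow, ← Real.rpow_natCast, ← Real.rpow_mul hx]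
  norm_num

lemma rpow_quarter_div_sqrt_eq {a b p : ℝ} (ha : 0 ≤ a) (hb : 0 < b) (hp : 0 < p) :
    (a / (p ^ 3 * b)) ^ ((1 : ℝ) / 4) / √(2 / p)
      = (a / (4 * b)) ^ ((1 : ℝ) / 4) * p ^ (-(1 : ℝ) / 4) := by
  have hquot : a / (p ^ 3 * b) / (2 / p) ^ 2 = a / (4 * b) * p⁻¹ := by
    field_simp
    ring
  rw [sqrt_eq_sq_rpow_quarter (by positivity), ← Real.div_rpow (by positivity) (by positivity),
    hquot, Real.mul_rpow (by positivity) (by positivity), Real.inv_rpow hp.le,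
    ← Real.rpow_neg hp.le, neg_div]

lemma exists_lt_of_tendsto_div_atTop {f g : ℝ → ℝ} {a : ℝ} (hg : ∀ x, a < x → 0 < g x)
    (h : Tendsto (fun x => f x / g x) (𝓝[>] a) atTop) :
    ∃ δ, a < δ ∧ ∀ x, a < x → x < δ → g x < f x := by
  have hev : ∀ᶠ x in 𝓝[>] a, g x < f x := by
    filter_upwards [h.eventually_gt_atTop 1, self_mem_nhdsWithin] with x hx hax
    rwa [one_lt_div (hg x hax)] at hx
  obtain ⟨δ, hδ, hsub⟩ := mem_nhdsGT_iff_exists_Ioo_subset.mp hev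
  exact ⟨δ, hδ, fun x hax hxδ => hsub ⟨hax, hxδ⟩⟩

/-- Comparison of steady-state windows: for small enough loss probability,
CUBIC's window exceeds Reno's, the ratio is `(τ³c/(4b))^{1/4} p^{-1/4}`,
and it tends to infinity as `p → 0⁺`. -/
theorem cubic_vs_reno_window
    (τ c b : ℝ) (hτ : 0 < τ) (hc : 0 < c) (hb : 0 < b)
    (WR WC : ℝ → ℝ)
    (hWR : ∀ p : ℝ, WR p = Real.sqrt (2 / p))
    (hWC : ∀ p : ℝ, WC p = (τ ^ 3 * c / (p ^ 3 * b)) ^ ((1 : ℝ) / 4)) :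
    (∃ pstar : ℝ, 0 < pstar ∧ ∀ p : ℝ, 0 < p → p < pstar → WR p < WC p) ∧
    (∀ p : ℝ, 0 < p →
      WC p / WR p = (τ ^ 3 * c / (4 * b)) ^ ((1 : ℝ) / 4) * p ^ (-(1 : ℝ) / 4)) ∧
    Tendsto (fun p => WC p / WR p) (𝓝[>] (0 : ℝ)) atTop := by
  have hratio : ∀ p : ℝ, 0 < p →
      WC p / WR p = (τ ^ 3 * c / (4 * b)) ^ ((1 : ℝ) / 4) * p ^ (-(1 : ℝ) / 4) := fun p hp => by
    rw [hWC, hWR]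
    exact rpow_quarter_div_sqrt_eq (by positivity) hb hp
  have hlim : Tendsto (fun p => WC p / WR p) (𝓝[>] (0 : ℝ)) atTop := by
    have hpow := tendsto_rpow_neg_nhdsGT_zero (y := -(1 : ℝ) / 4) (by norm_num)
    refine (hpow.const_mul_atTop (r := (τ ^ 3 * c / (4 * b)) ^ ((1 : ℝ) / 4))
      (by positivity)).congr' ?_
    filter_upwards [self_mem_nhdsWithin] with p hp using (hratio p hp).symm
  refine ⟨exists_lt_of_tendsto_div_atTop (fun p hp => ?_) hlim, hratio, hlim⟩
  rw [hWR]
  exact Real.sqrt_pos.mpr (div_pos two_pos hp)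
end
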